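/- arXiv:1707.04326 — 2 statements merged into one kernel-verified Lean document; each statement's English description precedes it below -/
import Mathlib

section
/- Fix a real number N > 1 and D ∈ (0,π], and set ε := π − D. Every CD(N−1,N) density h on [0,D] with h(t) > 0 for all t ∈ (0,D) is locally Lipschitz on (0,D), and at every t ∈ (0,D) at which h is differentiable one has h_N′(t+ε)/h_N(t+ε) ≤ h′(t)/h(t) ≤ h_N′(t)/h_N(t). -/
open Real MeasureTheory Set Filter

/-- `ω_N = ∫_0^π sin^{N-1}(t) dt`. -/
noncomputable def omegaN (N : ℝ) : ℝ := ∫ t in (0:ℝ)..π, Real.sin t ^ (N - 1)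

/-- The model density `h_N(t) = sin^{N-1}(t)/ω_N`. -/
noncomputable def hmodel (N t : ℝ) : ℝ := Real.sin t ^ (N - 1) / omegaN N

/-- `h` is a `CD(N-1,N)` density on `[0,D]`. -/
def IsCDDensity (N D : ℝ) (h : ℝ → ℝ) : Prop :=
  (∀ t ∈ Set.Icc (0:ℝ) D, 0 ≤ h t) ∧
  ∀ t₀ t₁ s : ℝ, 0 ≤ t₀ → t₀ ≤ t₁ → t₁ ≤ D → s ∈ Set.Icc (0:ℝ) 1 →
    Real.sin ((1 - s) * (t₁ - t₀)) * h t₀ ^ (1 / (N - 1))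
      + Real.sin (s * (t₁ - t₀)) * h t₁ ^ (1 / (N - 1))
    ≤ Real.sin (t₁ - t₀) * h ((1 - s) * t₀ + s * t₁) ^ (1 / (N - 1))

/-!
Write `f = h ^ (1/(N-1))`. Taking `t₀ = 0` in the `CD(N-1,N)` inequality shows that `f / sin` is
nonincreasing, and taking `t₁ = D` that `f / sin (D - ·)` is nondecreasing. For `t₀ < t₁` in
`(0,D)` the concavity of `sin` on `[0,π]` turns the inequality into concavity of `f`, so `f` is
locally Lipschitz on `(0,D)`, and so is `h = f ^ (N-1)` since `f > 0` there. At a point of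
differentiability the two monotone ratios have derivatives of a fixed sign, which bounds `f'/f`
between `-cot (D - t) = cot (t + π - D)` and `cot t`; multiplying by `N - 1` gives the model's
logarithmic derivatives `h_N'/h_N = (N-1) cot`.
-/

open Topology

theorem LipschitzOnWith.congr {α β : Type*} [PseudoEMetricSpace α] [PseudoEMetricSpace β]
    {K : NNReal} {f g : α → β} {s : Set α} (hf : LipschitzOnWith K f s) (hfg : EqOn f g s) :
    LipschitzOnWith K g s := fun x hx y hy => by
  rw [← hfg hx, ← hfg hy]
  exact hf hx hy

theorem LipschitzOnWith.exists_comp_of_hasStrictFDerivAt {α E F : Type*} [PseudoEMetricSpace α]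
    [NormedAddCommGroup E] [NormedSpace ℝ E] [NormedAddCommGroup F] [NormedSpace ℝ F]
    {f : α → E} {g : E → F} {g' : E →L[ℝ] F} {K : NNReal} {U : Set α} {x : α}
    (hf : LipschitzOnWith K f U) (hU : U ∈ 𝓝 x) (hg : HasStrictFDerivAt g g' (f x)) :
    ∃ K', ∃ V ∈ 𝓝 x, LipschitzOnWith K' (g ∘ f) V := by
  obtain ⟨Kg, W, hW, hgW⟩ := hg.exists_lipschitzOnWith
  exact ⟨Kg * K, U ∩ f ⁻¹' W, inter_mem hU (hf.continuousOn.continuousAt hU hW),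
    hgW.comp (hf.mono inter_subset_left) ((mapsTo_preimage f W).mono_left inter_subset_right)⟩

theorem LipschitzOnWith.exists_Ioo_of_mem_nhds {β : Type*} [PseudoEMetricSpace β] {f : ℝ → β}
    {K : NNReal} {U : Set ℝ} {t : ℝ} (hf : LipschitzOnWith K f U) (hU : U ∈ 𝓝 t) :
    ∃ s > 0, LipschitzOnWith K f (Ioo (t - s) (t + s)) := by
  obtain ⟨s, hs, hball⟩ := Metric.mem_nhds_iff.1 hU
  exact ⟨s, hs, hf.mono (Real.ball_eq_Ioo t s ▸ hball)⟩

theorem HasDerivAt.nonpos_of_antitoneOn_of_mem_nhds {g : ℝ → ℝ} {g' x : ℝ} {s : Set ℝ}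
    (hd : HasDerivAt g g' x) (hs : s ∈ 𝓝 x) (hg : AntitoneOn g s) : g' ≤ 0 := by
  refine le_of_tendsto (hasDerivAt_iff_tendsto_slope.mp hd) ?_
  filter_upwards [nhdsWithin_le_nhds hs] with y hy
  exact hg.slope_nonpos (mem_of_mem_nhds hs) hy

theorem logDeriv_le_logDeriv_of_mul_le_mul {u v : ℝ → ℝ} {s : Set ℝ} {x : ℝ} (hs : s ∈ 𝓝 x)
    (hcross : ∀ a ∈ s, ∀ b ∈ s, a ≤ b → u b * v a ≤ u a * v b)
    (hv : ∀ y ∈ s, 0 < v y) (hux : 0 < u x)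
    (hud : DifferentiableAt ℝ u x) (hvd : DifferentiableAt ℝ v x) :
    logDeriv u x ≤ logDeriv v x := by
  have hvx := hv x (mem_of_mem_nhds hs)
  have hanti : AntitoneOn (fun y => u y / v y) s := fun a ha b hb hab => by
    rw [div_le_div_iff₀ (hv b hb) (hv a ha)]
    exact hcross a ha b hb hab
  have hq := (hud.hasDerivAt.div hvd.hasDerivAt hvx.ne').nonpos_of_antitoneOn_of_mem_nhds hs hanti
  rw [div_le_iff₀ (by positivity), zero_mul, sub_nonpos] at hq
  rw [logDeriv_apply, logDeriv_apply, div_le_div_iff₀ hux hvx]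
  linarith

theorem logDeriv_rpow_const {f : ℝ → ℝ} {x : ℝ} (p : ℝ) (hf : DifferentiableAt ℝ f x)
    (hx : 0 < f x) : logDeriv (fun y => f y ^ p) x = p * logDeriv f x := by
  rw [logDeriv_apply, logDeriv_apply, (hf.hasDerivAt.rpow_const (Or.inl hx.ne')).deriv,
    rpow_sub_one hx.ne']
  field_simp

theorem logDeriv_sin_add_const (c x : ℝ) : logDeriv (fun y => sin (y + c)) x = cot (x + c) := by
  change logDeriv (sin ∘ (· + c)) x = _
  rw [logDeriv_comp differentiableAt_sin (by fun_prop), Real.logDeriv_sin]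
  simp

theorem mul_sin_le_sin_mul {s x : ℝ} (hs₀ : 0 ≤ s) (hs₁ : s ≤ 1) (hx₀ : 0 ≤ x) (hxπ : x ≤ π) :
    s * sin x ≤ sin (s * x) := by
  simpa using strictConcaveOn_sin_Icc.concaveOn.2 (x := 0) (y := x) ⟨le_rfl, pi_pos.le⟩
    ⟨hx₀, hxπ⟩ (sub_nonneg.2 hs₁) hs₀ (by ring)

theorem omegaN_pos {N : ℝ} (hN : 1 < N) : 0 < omegaN N := by
  refine intervalIntegral.intervalIntegral_pos_of_pos_on ?_ (fun t ht => ?_) pi_pos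
  · exact (continuous_sin.rpow_const fun _ => Or.inr (by linarith)).intervalIntegrable _ _
  · exact rpow_pos_of_pos (sin_pos_of_pos_of_lt_pi ht.1 ht.2) _

theorem logDeriv_hmodel {N t : ℝ} (hN : 1 < N) (ht₀ : 0 < t) (htπ : t < π) :
    logDeriv (hmodel N) t = (N - 1) * cot t := by
  have hmodel_eq : hmodel N = fun y => sin y ^ (N - 1) * (omegaN N)⁻¹ := rfl
  rw [hmodel_eq, logDeriv_mul_const _ _ (inv_ne_zero (omegaN_pos hN).ne'),
    logDeriv_rpow_const _ differentiableAt_sin (sin_pos_of_pos_of_lt_pi ht₀ htπ),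
    Real.logDeriv_sin]

namespace IsCDDensity

variable {N D : ℝ} {h : ℝ → ℝ}

theorem rpow_mul_sin_le (hcd : IsCDDensity N D h) (hDπ : D ≤ π) {a b : ℝ} (ha : 0 ≤ a)
    (hab : a ≤ b) (hbD : b ≤ D) :
    h b ^ (1 / (N - 1)) * sin a ≤ h a ^ (1 / (N - 1)) * sin b := by
  rcases (ha.trans hab).eq_or_lt with rfl | hb
  · obtain rfl : a = 0 := le_antisymm hab ha
    rfl
  have key := hcd.2 0 b (a / b) le_rfl hb.le hbD ⟨div_nonneg ha hb.le, (div_le_one hb).2 hab⟩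
  simp only [sub_zero, mul_zero, zero_add, sub_mul, one_mul, div_mul_cancel₀ a hb.ne'] at key
  have hzero : 0 ≤ sin (b - a) * h 0 ^ (1 / (N - 1)) :=
    mul_nonneg (sin_nonneg_of_nonneg_of_le_pi (by linarith) (by linarith))
      (rpow_nonneg (hcd.1 0 ⟨le_rfl, by linarith⟩) _)
  linarith

theorem sin_sub_mul_rpow_le (hcd : IsCDDensity N D h) (hDπ : D ≤ π) {a b : ℝ} (ha : 0 ≤ a)
    (hab : a ≤ b) (hbD : b ≤ D) :
    sin (D - b) * h a ^ (1 / (N - 1)) ≤ sin (D - a) * h b ^ (1 / (N - 1)) := by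
  rcases (hab.trans hbD).eq_or_lt with rfl | haD
  · obtain rfl : b = a := le_antisymm hbD hab
    rfl
  have hDa : 0 < D - a := by linarith
  have key := hcd.2 a D ((b - a) / (D - a)) ha (hab.trans hbD) le_rfl
    ⟨div_nonneg (by linarith) hDa.le, (div_le_one hDa).2 (by linarith)⟩
  rw [show (1 - (b - a) / (D - a)) * (D - a) = D - b by field_simp; ring,
    show (b - a) / (D - a) * (D - a) = b - a by field_simp,
    show (1 - (b - a) / (D - a)) * a + (b - a) / (D - a) * D = b by field_simp; ring] at key
  have hzero : 0 ≤ sin (b - a) * h D ^ (1 / (N - 1)) :=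
    mul_nonneg (sin_nonneg_of_nonneg_of_le_pi (by linarith) (by linarith))
      (rpow_nonneg (hcd.1 D ⟨by linarith, le_rfl⟩) _)
  linarith

theorem mul_rpow_add_mul_rpow_le (hcd : IsCDDensity N D h) (hDπ : D ≤ π) {x y a b : ℝ}
    (hx : 0 < x) (hxy : x < y) (hy : y < D) (ha : 0 ≤ a) (hb : 0 ≤ b) (hab : a + b = 1) :
    a * h x ^ (1 / (N - 1)) + b * h y ^ (1 / (N - 1)) ≤ h (a * x + b * y) ^ (1 / (N - 1)) := by
  have key := hcd.2 x y b hx.le hxy.le hy.le ⟨hb, by linarith⟩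
  rw [show 1 - b = a by linarith] at key
  have hsin_a := mul_sin_le_sin_mul ha (by linarith) (sub_nonneg.2 hxy.le) (by linarith)
  have hsin_b := mul_sin_le_sin_mul hb (by linarith) (sub_nonneg.2 hxy.le) (by linarith)
  have hfx := rpow_nonneg (hcd.1 x ⟨hx.le, by linarith⟩) (1 / (N - 1))
  have hfy := rpow_nonneg (hcd.1 y ⟨by linarith, hy.le⟩) (1 / (N - 1))
  refine le_of_mul_le_mul_left ?_ (sin_pos_of_pos_of_lt_pi (sub_pos.2 hxy) (by linarith))
  calc sin (y - x) * (a * h x ^ (1 / (N - 1)) + b * h y ^ (1 / (N - 1)))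
      = a * sin (y - x) * h x ^ (1 / (N - 1)) + b * sin (y - x) * h y ^ (1 / (N - 1)) := by ring
    _ ≤ sin (a * (y - x)) * h x ^ (1 / (N - 1)) + sin (b * (y - x)) * h y ^ (1 / (N - 1)) := by
      gcongr
    _ ≤ sin (y - x) * h (a * x + b * y) ^ (1 / (N - 1)) := key

theorem concaveOn_rpow (hcd : IsCDDensity N D h) (hDπ : D ≤ π) :
    ConcaveOn ℝ (Ioo 0 D) fun t => h t ^ (1 / (N - 1)) := by
  refine concaveOn_iff_pairwise_pos.2 ⟨convex_Ioo 0 D, ?_⟩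
  intro x hx y hy hxy a b ha hb hab
  simp only [smul_eq_mul]
  rcases hxy.lt_or_gt with hlt | hgt
  · exact hcd.mul_rpow_add_mul_rpow_le hDπ hx.1 hlt hy.2 ha.le hb.le hab
  · rw [add_comm (a * _), add_comm (a * x)]
    exact hcd.mul_rpow_add_mul_rpow_le hDπ hy.1 hgt hx.2 hb.le ha.le (by linarith)

theorem locallyLipschitzOn (hcd : IsCDDensity N D h) (hN : N ≠ 1) (hDπ : D ≤ π)
    (hpos : ∀ t ∈ Ioo 0 D, 0 < h t) : LocallyLipschitzOn (Ioo 0 D) h := by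
  intro t ht
  obtain ⟨K, U, hU, hlip⟩ := (hcd.concaveOn_rpow hDπ).locallyLipschitzOn isOpen_Ioo ht
  rw [isOpen_Ioo.nhdsWithin_eq ht] at hU
  have hroot_pos : 0 < h t ^ (1 / (N - 1)) := rpow_pos_of_pos (hpos t ht) _
  obtain ⟨K', V, hV, hlip'⟩ := hlip.exists_comp_of_hasStrictFDerivAt hU
    (hasStrictDerivAt_rpow_const_of_ne hroot_pos.ne' (N - 1)).hasStrictFDerivAt
  refine ⟨K', Ioo 0 D ∩ V, inter_mem_nhdsWithin _ hV, ?_⟩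
  refine (hlip'.mono inter_subset_right).congr fun x hx => ?_
  simp only [Function.comp_apply, one_div]
  exact rpow_inv_rpow (hpos x hx.1).le (sub_ne_zero.2 hN)

theorem logDeriv_le_logDeriv_hmodel (hcd : IsCDDensity N D h) (hN : 1 < N) (hDπ : D ≤ π)
    (hpos : ∀ t ∈ Ioo 0 D, 0 < h t) {t : ℝ} (ht : t ∈ Ioo 0 D) (hd : DifferentiableAt ℝ h t) :
    logDeriv h t ≤ logDeriv (hmodel N) t := by
  have hroot : logDeriv (fun y => h y ^ (1 / (N - 1))) t ≤ logDeriv sin t :=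
    logDeriv_le_logDeriv_of_mul_le_mul (isOpen_Ioo.mem_nhds ht)
      (fun a ha b hb hab => hcd.rpow_mul_sin_le hDπ ha.1.le hab hb.2.le)
      (fun y hy => sin_pos_of_pos_of_lt_pi hy.1 (hy.2.trans_le hDπ))
      (rpow_pos_of_pos (hpos t ht) _) (hd.rpow_const (Or.inl (hpos t ht).ne'))
      differentiableAt_sin
  rw [logDeriv_rpow_const _ hd (hpos t ht), Real.logDeriv_sin, one_div,
    inv_mul_le_iff₀ (sub_pos.2 hN)] at hroot
  rwa [logDeriv_hmodel hN ht.1 (ht.2.trans_le hDπ)]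

theorem logDeriv_hmodel_add_le_logDeriv (hcd : IsCDDensity N D h) (hN : 1 < N) (hDπ : D ≤ π)
    (hpos : ∀ t ∈ Ioo 0 D, 0 < h t) {t : ℝ} (ht : t ∈ Ioo 0 D) (hd : DifferentiableAt ℝ h t) :
    logDeriv (hmodel N) (t + (π - D)) ≤ logDeriv h t := by
  have hsin_shift : ∀ y, sin (y + (π - D)) = sin (D - y) := fun y => by
    rw [← sin_pi_sub]
    ring_nf
  have hroot : logDeriv (fun y => sin (y + (π - D))) t ≤
      logDeriv (fun y => h y ^ (1 / (N - 1))) t :=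
    logDeriv_le_logDeriv_of_mul_le_mul (isOpen_Ioo.mem_nhds ht)
      (fun a ha b hb hab => by
        simpa only [hsin_shift] using hcd.sin_sub_mul_rpow_le hDπ ha.1.le hab hb.2.le)
      (fun y hy => rpow_pos_of_pos (hpos y hy) _)
      (hsin_shift t ▸ sin_pos_of_pos_of_lt_pi (by linarith [ht.2]) (by linarith [ht.1]))
      (by fun_prop) (hd.rpow_const (Or.inl (hpos t ht).ne'))
  rw [logDeriv_rpow_const _ hd (hpos t ht), logDeriv_sin_add_const, one_div,
    le_inv_mul_iff₀ (sub_pos.2 hN)] at hroot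
  rwa [logDeriv_hmodel hN (by linarith [ht.1]) (by linarith [ht.2])]

end IsCDDensity

/-- Corollary A.2 (Corollary `C:A2`): a positive `CD(N-1,N)` density on `[0,D]` is
locally Lipschitz on `(0,D)`, and its logarithmic derivative is pinched between those of
the model density (shifted by `ε = π - D`). -/
theorem cd_density_locally_lipschitz_and_logderiv (N D : ℝ) (hN1 : 1 < N)
    (hD : D ∈ Set.Ioc (0:ℝ) π) (h : ℝ → ℝ) (hcd : IsCDDensity N D h)
    (hpos : ∀ t ∈ Set.Ioo (0:ℝ) D, 0 < h t) :
    (∀ t ∈ Set.Ioo (0:ℝ) D, ∃ s > 0, ∃ K : NNReal,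
        LipschitzOnWith K h (Set.Ioo (t - s) (t + s))) ∧
    ∀ t ∈ Set.Ioo (0:ℝ) D, DifferentiableAt ℝ h t →
      deriv (hmodel N) (t + (π - D)) / hmodel N (t + (π - D)) ≤ deriv h t / h t ∧
      deriv h t / h t ≤ deriv (hmodel N) t / hmodel N t := by
  refine ⟨fun t ht => ?_, fun t ht hd => ?_⟩
  · obtain ⟨K, U, hU, hlip⟩ := hcd.locallyLipschitzOn hN1.ne' hD.2 hpos ht
    rw [isOpen_Ioo.nhdsWithin_eq ht] at hU
    obtain ⟨s, hs, hlip_Ioo⟩ := hlip.exists_Ioo_of_mem_nhds hU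
    exact ⟨s, hs, K, hlip_Ioo⟩
  · exact ⟨hcd.logDeriv_hmodel_add_le_logDeriv hN1 hD.2 hpos ht hd,
      hcd.logDeriv_le_logDeriv_hmodel hN1 hD.2 hpos ht hd⟩
end

section
/- Fix a real number N > 1 and D ∈ (0,π]. If h is a CD(N−1,N) density on [0,D] with ∫_0^D h(t) dt = 1, then h(t) > 0 for every t ∈ (0,D). -/
open Real Set

/-!
If `h` vanished at an interior point `t`, then for every `u ∈ [0,D]` the `CD(N-1,N)` inequality
on `[u,D]` (if `u < t`) or on `[0,u]` (if `t < u`), evaluated at `t`, bounds a positive multiple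
of `h u ^ (1/(N-1))` by `0`. So `h` vanishes on `[0,D]` and cannot have integral `1`.
-/

namespace IsCDDensity

variable {N D : ℝ} {h : ℝ → ℝ}

theorem sin_mul_add_sin_mul_le (hcd : IsCDDensity N D h) {t₀ t t₁ : ℝ} (h₀ : 0 ≤ t₀)
    (h₁ : t₁ ≤ D) (ht : t ∈ Icc t₀ t₁) (hlt : t₀ < t₁) :
    sin (t₁ - t) * h t₀ ^ (1 / (N - 1)) + sin (t - t₀) * h t₁ ^ (1 / (N - 1))
      ≤ sin (t₁ - t₀) * h t ^ (1 / (N - 1)) := by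
  have hL : 0 < t₁ - t₀ := sub_pos.2 hlt
  set s := (t - t₀) / (t₁ - t₀)
  have hs : s ∈ Icc (0 : ℝ) 1 :=
    ⟨div_nonneg (sub_nonneg.2 ht.1) hL.le, (div_le_one hL).2 (by linarith [ht.2])⟩
  have key := hcd.2 t₀ t₁ s h₀ hlt.le h₁ hs
  have e₀ : (1 - s) * (t₁ - t₀) = t₁ - t := by simp only [s]; field_simp; ring
  have e₁ : s * (t₁ - t₀) = t - t₀ := by simp only [s]; field_simp
  have e : (1 - s) * t₀ + s * t₁ = t := by simp only [s]; field_simp; ring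
  rwa [e₀, e₁, e] at key

theorem eq_zero_of_eq_zero_of_mem_Ioo (hcd : IsCDDensity N D h) (hN : N ≠ 1)
    {t₀ t t₁ : ℝ} (h₀ : 0 ≤ t₀) (h₁ : t₁ ≤ D) (hπ : t₁ - t₀ ≤ π) (ht : t ∈ Ioo t₀ t₁)
    (hzero : h t = 0) : h t₀ = 0 ∧ h t₁ = 0 := by
  have hp : 1 / (N - 1) ≠ 0 := one_div_ne_zero (sub_ne_zero.2 hN)
  have key := hcd.sin_mul_add_sin_mul_le h₀ h₁ (Ioo_subset_Icc_self ht) (ht.1.trans ht.2)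
  rw [hzero, zero_rpow hp, mul_zero] at key
  have hsin₀ : 0 < sin (t₁ - t) := sin_pos_of_pos_of_lt_pi (by linarith [ht.2]) (by linarith [ht.1])
  have hsin₁ : 0 < sin (t - t₀) := sin_pos_of_pos_of_lt_pi (by linarith [ht.1]) (by linarith [ht.2])
  have hnn₀ : 0 ≤ h t₀ := hcd.1 t₀ ⟨h₀, by linarith [ht.1, ht.2]⟩
  have hnn₁ : 0 ≤ h t₁ := hcd.1 t₁ ⟨by linarith [ht.1, ht.2], h₁⟩
  obtain ⟨e₀, e₁⟩ := (add_eq_zero_iff_of_nonneg (by positivity) (by positivity)).1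
    (le_antisymm key (by positivity))
  rw [mul_eq_zero, or_iff_right hsin₀.ne', rpow_eq_zero hnn₀ hp] at e₀
  rw [mul_eq_zero, or_iff_right hsin₁.ne', rpow_eq_zero hnn₁ hp] at e₁
  exact ⟨e₀, e₁⟩

theorem eqOn_zero_of_eq_zero (hcd : IsCDDensity N D h) (hN : N ≠ 1) (hD : D ≤ π)
    {t : ℝ} (ht : t ∈ Ioo 0 D) (hzero : h t = 0) : EqOn h 0 (Icc 0 D) := by
  intro u hu
  rcases lt_trichotomy u t with hut | rfl | htu
  · exact (hcd.eq_zero_of_eq_zero_of_mem_Ioo hN hu.1 le_rfl (by linarith [hu.1])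
      ⟨hut, ht.2⟩ hzero).1
  · exact hzero
  · exact (hcd.eq_zero_of_eq_zero_of_mem_Ioo hN le_rfl hu.2 (by linarith [hu.2])
      ⟨ht.1, htu⟩ hzero).2

end IsCDDensity

/-- A `CD(N-1,N)` density on `[0,D]` integrating to `1` is strictly positive on `(0,D)`. -/
theorem cd_density_pos (N D : ℝ) (hN1 : 1 < N) (hD : D ∈ Set.Ioc (0:ℝ) π)
    (h : ℝ → ℝ) (hcd : IsCDDensity N D h) (hint : (∫ t in (0:ℝ)..D, h t) = 1) :
    ∀ t ∈ Set.Ioo (0:ℝ) D, 0 < h t := by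
  intro t ht
  refine (hcd.1 t (Ioo_subset_Icc_self ht)).lt_of_ne' fun hzero => ?_
  have hvanish := hcd.eqOn_zero_of_eq_zero hN1.ne' hD.2 ht hzero
  have hint_zero : (∫ u in (0:ℝ)..D, h u) = 0 := by
    rw [intervalIntegral.integral_congr (g := 0) (by rwa [uIcc_of_le hD.1.le])]
    simp
  linarith
end
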